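/- Fix indices i, j with 1 ≤ i ≤ q, 1 ≤ j ≤ p. Assume W, A, S have nonnegative entries and s^t := S_{ij} > 0. Let F(s) = D(W, A, S') where S' agrees with S except that its (i,j) entry is replaced by s, and define G(s, s^t) = F(s^t) + F'(s^t)·(s − s^t) + ((Aᵀ·Wᵀ·W·A·S)_{ij} / s^t)·(s − s^t)², where F' denotes the derivative of F. Then G is an auxiliary function for F: G(s^t, s^t) = F(s^t) and G(s, s^t) ≥ F(s) for all s ∈ ℝ. -/

import Mathlib

open Matrix

/-- The GBR-NMF objective `D(W,A,S) = ‖X − W·A·S‖_F² = Tr((X − WAS)(X − WAS)ᵀ)`. -/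
noncomputable def objD {n p q : ℕ} (X : Matrix (Fin n) (Fin p) ℝ)
    (W : Matrix (Fin n) (Fin q) ℝ) (A : Matrix (Fin q) (Fin q) ℝ)
    (S : Matrix (Fin q) (Fin p) ℝ) : ℝ :=
  Matrix.trace ((X - W * A * S) * (X - W * A * S)ᵀ)

/-- The matrix agreeing with `M` except that its `(i,j)` entry is replaced by `w`. -/
def updEntry {m k : ℕ} (M : Matrix (Fin m) (Fin k) ℝ) (i : Fin m) (j : Fin k) (w : ℝ) :
    Matrix (Fin m) (Fin k) ℝ :=
  fun a b => if a = i ∧ b = j then w else M a b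

/-!
Along the line `s ↦ S + (s - sᵗ) E_{ij}` the objective is a quadratic polynomial in
`s - sᵗ` with leading coefficient `((WA)ᵀ(WA))_{ii}`, so `G` majorizes `F` as soon as
`((WA)ᵀ(WA))_{ii} · sᵗ ≤ ((WA)ᵀ(WA) S)_{ij}`; with nonnegative entries the left side is
just one of the nonnegative summands of the right side.
-/

namespace Matrix

variable {l m n α : Type*} [Fintype m]

theorem trace_sub_smul_mul_transpose_sub_smul [Fintype l] [Fintype n] [CommRing α]
    (R M : Matrix l n α) (t : α) :
    trace ((R - t • M) * (R - t • M)ᵀ) =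
      trace (R * Rᵀ) - 2 * t * trace (R * Mᵀ) + t ^ 2 * trace (M * Mᵀ) := by
  have hsymm : trace (M * Rᵀ) = trace (R * Mᵀ) := by
    rw [← trace_transpose, transpose_mul, transpose_transpose]
  simp only [transpose_sub, transpose_smul, Matrix.sub_mul, Matrix.mul_sub, Matrix.smul_mul,
    Matrix.mul_smul, trace_sub, trace_smul, hsymm, smul_eq_mul]
  ring

theorem trace_mul_single_mul_transpose [Fintype l] [Fintype n] [DecidableEq m] [DecidableEq n]
    [CommRing α] (B : Matrix l m α) (i : m) (j : n) :
    trace (B * single i j (1 : α) * (B * single i j (1 : α))ᵀ) = (Bᵀ * B) i i := by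
  rw [transpose_mul, transpose_single, Matrix.mul_assoc, ← Matrix.mul_assoc (single i j 1),
    single_mul_single_same, ← Matrix.mul_assoc, trace_mul_comm, ← Matrix.mul_assoc,
    trace_mul_single]
  simp

theorem mul_apply_nonneg {A : Matrix l m ℝ} {B : Matrix m n ℝ}
    (hA : ∀ a b, 0 ≤ A a b) (hB : ∀ a b, 0 ≤ B a b) (a : l) (b : n) : 0 ≤ (A * B) a b :=
  Finset.sum_nonneg fun k _ => mul_nonneg (hA a k) (hB k b)

theorem diag_mul_apply_le_mul_apply {C : Matrix m m ℝ} {S : Matrix m n ℝ}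
    (hC : ∀ a b, 0 ≤ C a b) (hS : ∀ a b, 0 ≤ S a b) (i : m) (j : n) :
    C i i * S i j ≤ (C * S) i j :=
  Finset.single_le_sum (f := fun k => C i k * S k j)
    (fun k _ => mul_nonneg (hC i k) (hS k j)) (Finset.mem_univ i)

end Matrix

theorem updEntry_eq_add_smul_single {m k : ℕ} (M : Matrix (Fin m) (Fin k) ℝ)
    (i : Fin m) (j : Fin k) (w : ℝ) :
    updEntry M i j w = M + (w - M i j) • single i j (1 : ℝ) := by
  ext a b
  by_cases ha : a = i <;> by_cases hb : b = j <;> simp [updEntry, single, ha, hb, Ne.symm]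

theorem objD_updEntry {n p q : ℕ} (X : Matrix (Fin n) (Fin p) ℝ)
    (W : Matrix (Fin n) (Fin q) ℝ) (A : Matrix (Fin q) (Fin q) ℝ)
    (S : Matrix (Fin q) (Fin p) ℝ) (i : Fin q) (j : Fin p) (s : ℝ) :
    objD X W A (updEntry S i j s) =
      objD X W A S - 2 * trace ((X - W * A * S) * (W * A * single i j (1 : ℝ))ᵀ) * (s - S i j)
        + ((W * A)ᵀ * (W * A)) i i * (s - S i j) ^ 2 := by
  have hres : X - W * A * updEntry S i j s =
      (X - W * A * S) - (s - S i j) • (W * A * single i j (1 : ℝ)) := by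
    rw [updEntry_eq_add_smul_single, Matrix.mul_add, Matrix.mul_smul]
    abel
  rw [objD, hres, trace_sub_smul_mul_transpose_sub_smul, trace_mul_single_mul_transpose, objD]
  ring

theorem deriv_quadratic_at_center (a b c x₀ : ℝ) :
    deriv (fun x => c + b * (x - x₀) + a * (x - x₀) ^ 2) x₀ = b := by
  have h : HasDerivAt (fun x : ℝ => x - x₀) 1 x₀ := (hasDerivAt_id x₀).sub_const x₀
  have hq : HasDerivAt (fun x => c + b * (x - x₀) + a * (x - x₀) ^ 2)
      (0 + b * 1 + a * (2 * (x₀ - x₀) ^ 1 * 1)) x₀ :=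
    ((hasDerivAt_const x₀ c).add (h.const_mul b)).add ((h.pow 2).const_mul a)
  simpa using hq.deriv

/-- (Lemma on `S`-updates.) With `sᵗ = S_{ij} > 0`, `F(s) = D(W, A, S')` (entry `(i,j)` of `S`
replaced by `s`), the function
`G(s, sᵗ) = F(sᵗ) + F'(sᵗ)(s − sᵗ) + ((Aᵀ·Wᵀ·W·A·S)_{ij}/sᵗ)(s − sᵗ)²`
is an auxiliary function for `F`: `G(sᵗ, sᵗ) = F(sᵗ)` and `G(s, sᵗ) ≥ F(s)` for all `s`. -/
theorem aux_function_for_S_update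
    (n p q : ℕ)
    (X : Matrix (Fin n) (Fin p) ℝ) (W : Matrix (Fin n) (Fin q) ℝ)
    (A : Matrix (Fin q) (Fin q) ℝ) (S : Matrix (Fin q) (Fin p) ℝ)
    (hW : ∀ i j, 0 ≤ W i j) (hA : ∀ i j, 0 ≤ A i j) (hS : ∀ i j, 0 ≤ S i j)
    (i : Fin q) (j : Fin p) (hpos : 0 < S i j) :
    let F : ℝ → ℝ := fun s => objD X W A (updEntry S i j s)
    let G : ℝ → ℝ := fun s =>
      F (S i j) + deriv F (S i j) * (s - S i j)
        + ((Aᵀ * Wᵀ * W * A * S) i j / S i j) * (s - S i j) ^ 2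
    G (S i j) = F (S i j) ∧ ∀ s : ℝ, G s ≥ F s := by
  intro F G
  set B := W * A with hB
  set a := (Bᵀ * B) i i
  set b := -2 * trace ((X - B * S) * (B * single i j (1 : ℝ))ᵀ)
  have hF : F = fun s => objD X W A S + b * (s - S i j) + a * (s - S i j) ^ 2 := by
    ext s
    simp only [F, objD_updEntry, b, a]
    ring
  have hFS : F (S i j) = objD X W A S := by simp [hF]
  have hderiv : deriv F (S i j) = b := by rw [hF]; exact deriv_quadratic_at_center ..
  have hBnonneg := Matrix.mul_apply_nonneg hW hA
  have hcoeff : a ≤ (Aᵀ * Wᵀ * W * A * S) i j / S i j := by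
    rw [le_div_iff₀ hpos, show Aᵀ * Wᵀ * W * A = Bᵀ * B by
      rw [hB, transpose_mul, Matrix.mul_assoc (Aᵀ * Wᵀ), Matrix.mul_assoc]]
    exact Matrix.diag_mul_apply_le_mul_apply
      (Matrix.mul_apply_nonneg (fun a b => hBnonneg b a) hBnonneg) hS i j
  refine ⟨by simp [G], fun s => ?_⟩
  have hquad := mul_le_mul_of_nonneg_right hcoeff (sq_nonneg (s - S i j))
  simp only [G, ge_iff_le, hderiv, hFS]
  rw [hF]
  linarith
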